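/- arXiv:2405.05375 — 2 statements merged into one kernel-verified Lean document; each statement's English description precedes it below -/
import Mathlib

section
/- If G is a weighted universal product antimagic graph, then every leafy graph of G is universal product antimagic. -/
open scoped Classical

noncomputable def edgeFS {V : Type*} [Fintype V] (G : SimpleGraph V) : Finset (Sym2 V) :=
  G.edgeSet.toFinset

noncomputable def vSum {V : Type*} [Fintype V] (G : SimpleGraph V) (φ : Sym2 V → ℝ) (v : V) : ℝ :=
  ∑ e ∈ (edgeFS G).filter (fun e => v ∈ e), φ e

noncomputable def vProd {V : Type*} [Fintype V] (G : SimpleGraph V) (φ : Sym2 V → ℝ) (v : V) : ℝ :=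
  ∏ e ∈ (edgeFS G).filter (fun e => v ∈ e), φ e

/-- Weighted universal product antimagic. -/
def WeightedUnivProdAntimagic {V : Type*} [Fintype V] (G : SimpleGraph V) : Prop :=
  ∀ w : V → ℝ, (∀ v, 1 ≤ w v) →
    ∀ L : Finset ℝ, (∀ x ∈ L, 1 ≤ x) → L.card = (edgeFS G).card →
      ∃ φ : Sym2 V → ℝ, Set.BijOn φ ↑(edgeFS G) ↑L ∧
        Function.Injective (fun v => w v * vProd G φ v)

/-- `G` has a product antimagic `L`-labeling for every set `L` of `(edgeFS G).card`
reals, all at least `1`. -/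
def UnivProdAntimagic {V : Type*} [Fintype V] (G : SimpleGraph V) : Prop :=
  ∀ L : Finset ℝ, (∀ x ∈ L, 1 ≤ x) → L.card = (edgeFS G).card →
    ∃ φ : Sym2 V → ℝ, Set.BijOn φ ↑(edgeFS G) ↑L ∧ Function.Injective (vProd G φ)

/-- `G'` is a leafy graph of `G`: `G'` is obtained from `G` by attaching a non-negative
number of new pendant edges (new leaves) to each interior vertex (degree at least two)
of `G`. -/
def IsLeafyGraphOf {V V' : Type*} [Fintype V] [Fintype V'] (G' : SimpleGraph V')
    (G : SimpleGraph V) : Prop :=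
  ∃ f : V ↪ V',
    (∀ u v : V, G'.Adj (f u) (f v) ↔ G.Adj u v) ∧
    (∀ x : V', x ∉ Set.range f →
      G'.degree x = 1 ∧ ∃ v : V, G'.Adj x (f v) ∧ 2 ≤ G.degree v)

/-! ### Auxiliary lemmas -/

lemma mem_edgeFS {V : Type*} [Fintype V] (G : SimpleGraph V) (e : Sym2 V) :
    e ∈ edgeFS G ↔ e ∈ G.edgeSet := Set.mem_toFinset

lemma edgeFS_filter_card {V : Type*} [Fintype V] (G : SimpleGraph V) (u : V) :
    ((edgeFS G).filter (fun e => u ∈ e)).card = G.degree u := by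
  have h : edgeFS G = G.edgeFinset := by
    ext e; simp [edgeFS, SimpleGraph.mem_edgeFinset, Set.mem_toFinset]
  rw [h, ← SimpleGraph.incidenceFinset_eq_filter, SimpleGraph.card_incidenceFinset_eq_degree]

lemma exists_smallest_subset (A : Finset ℝ) : ∀ (k : ℕ), k ≤ A.card →
    ∃ S ⊆ A, S.card = k ∧ ∀ s ∈ S, ∀ a ∈ A, a ∉ S → s ≤ a := by
  intro k
  induction k with
  | zero => intro _; exact ⟨∅, Finset.empty_subset _, rfl, by simp⟩
  | succ n ih =>
    intro hk
    obtain ⟨S, hSA, hScard, hSle⟩ := ih (Nat.le_of_succ_le hk)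
    have hne : (A \ S).Nonempty := by
      rw [← Finset.card_pos, Finset.card_sdiff_of_subset hSA, hScard]
      omega
    have hmmem : (A \ S).min' hne ∈ A \ S := (A \ S).min'_mem hne
    refine ⟨insert ((A \ S).min' hne) S,
      Finset.insert_subset (Finset.mem_sdiff.mp hmmem).1 hSA, ?_, ?_⟩
    · rw [Finset.card_insert_of_notMem (Finset.mem_sdiff.mp hmmem).2, hScard]
    · intro s hs a ha haS
      have haS' : a ∉ S := fun h => haS (Finset.mem_insert_of_mem h)
      rcases Finset.mem_insert.mp hs with rfl | hs'
      · exact Finset.min'_le _ _ (Finset.mem_sdiff.mpr ⟨ha, haS'⟩)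
      · exact hSle s hs' a ha haS'

lemma one_le_prod_real {ι : Type*} (s : Finset ι) (g : ι → ℝ) (h : ∀ i ∈ s, 1 ≤ g i) :
    1 ≤ ∏ i ∈ s, g i := by
  calc (1:ℝ) = ∏ _i ∈ s, 1 := by simp
  _ ≤ ∏ i ∈ s, g i := Finset.prod_le_prod (by intros; norm_num) h

lemma single_le_prod_real {ι : Type*} (s : Finset ι) (g : ι → ℝ) (h : ∀ i ∈ s, 1 ≤ g i)
    (j : ι) (hj : j ∈ s) : g j ≤ ∏ i ∈ s, g i := by
  classical
  rw [← Finset.mul_prod_erase s g hj]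
  have h1 : (1:ℝ) ≤ ∏ i ∈ s.erase j, g i :=
    one_le_prod_real _ _ (fun i hi => h i (Finset.mem_of_mem_erase hi))
  nlinarith [h j hj]

/-- If `G` is weighted universal product antimagic, then every leafy
graph of `G` is universal product antimagic. -/
theorem stmt_8 {V V' : Type*} [Fintype V] [Fintype V'] (G : SimpleGraph V)
    (G' : SimpleGraph V') (hG : WeightedUnivProdAntimagic G) (hleafy : IsLeafyGraphOf G' G) :
    UnivProdAntimagic G' := by
  classical
  obtain ⟨f, hf1, hf2⟩ := hleafy
  intro L hL1 hLcard
  -- the set of new leaves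
  set X : Finset V' := Finset.univ.filter (fun x => x ∉ Set.range f) with hXdef
  have hXmem : ∀ x : V', x ∈ X ↔ x ∉ Set.range f := by intro x; simp [hXdef]
  -- the unique neighbor of a leaf
  have hnbE : ∀ x : V', x ∉ Set.range f → ∃ v : V, G'.Adj x (f v) ∧ 2 ≤ G.degree v :=
    fun x hx => (hf2 x hx).2
  set nb : V' → V' := fun x => if h : x ∉ Set.range f then f (hnbE x h).choose else x with hnbdef
  have hnbadj : ∀ x, x ∉ Set.range f → G'.Adj x (nb x) := by
    intro x hx
    simp only [hnbdef, dif_pos hx]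
    exact (hnbE x hx).choose_spec.1
  have hnbspec : ∀ x, x ∉ Set.range f → ∃ v : V, nb x = f v ∧ 2 ≤ G.degree v := by
    intro x hx
    exact ⟨(hnbE x hx).choose, by simp only [hnbdef, dif_pos hx], (hnbE x hx).choose_spec.2⟩
  have hnbrange : ∀ x, x ∉ Set.range f → nb x ∈ Set.range f := by
    intro x hx; obtain ⟨v, hv, _⟩ := hnbspec x hx; exact ⟨v, hv.symm⟩
  have huniq : ∀ x, x ∉ Set.range f → ∀ b, G'.Adj x b → b = nb x := by
    intro x hx b hb
    have hdeg : (G'.neighborFinset x).card = 1 := by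
      rw [SimpleGraph.card_neighborFinset_eq_degree]; exact (hf2 x hx).1
    have h1 : b ∈ G'.neighborFinset x := by simpa using hb
    have h2 : nb x ∈ G'.neighborFinset x := by simpa using hnbadj x hx
    exact Finset.card_le_one.mp (le_of_eq hdeg) b h1 (nb x) h2
  -- edge decomposition
  set I : Finset (Sym2 V') := (edgeFS G).image (Sym2.map f) with hIdef
  set P : Finset (Sym2 V') := X.image (fun x => s(x, nb x)) with hPdef
  have hIsub : I ⊆ edgeFS G' := by
    intro e he
    rw [hIdef, Finset.mem_image] at he
    obtain ⟨a, ha, rfl⟩ := he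
    rw [mem_edgeFS] at ha ⊢
    induction a using Sym2.ind with
    | _ u v =>
      rw [Sym2.map_pair_eq, SimpleGraph.mem_edgeSet]
      exact (hf1 u v).mpr (G.mem_edgeSet.mp ha)
  have hPsub : P ⊆ edgeFS G' := by
    intro e he
    rw [hPdef, Finset.mem_image] at he
    obtain ⟨x, hx, rfl⟩ := he
    exact (mem_edgeFS G' _).mpr (G'.mem_edgeSet.mpr (hnbadj x ((hXmem x).mp hx)))
  have hcover : ∀ e ∈ edgeFS G', e ∈ I ∨ e ∈ P := by
    intro e he
    rw [mem_edgeFS] at he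
    revert he
    induction e using Sym2.ind with
    | _ a b =>
      intro he
      have hab : G'.Adj a b := G'.mem_edgeSet.mp he
      by_cases ha : a ∈ Set.range f
      · by_cases hb : b ∈ Set.range f
        · obtain ⟨u, rfl⟩ := ha; obtain ⟨v, rfl⟩ := hb
          left
          rw [hIdef, Finset.mem_image]
          exact ⟨s(u,v), (mem_edgeFS G _).mpr (G.mem_edgeSet.mpr ((hf1 u v).mp hab)), by simp⟩
        · right
          have hba : a = nb b := huniq b hb a hab.symm
          rw [hPdef, Finset.mem_image]
          exact ⟨b, (hXmem b).mpr hb, by rw [← hba, Sym2.eq_swap]⟩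
      · right
        have hba : b = nb a := huniq a ha b hab
        rw [hPdef, Finset.mem_image]
        exact ⟨a, (hXmem a).mpr ha, by rw [← hba]⟩
  have hIP : ∀ e, e ∈ I → e ∈ P → False := by
    intro e heI heP
    rw [hIdef, Finset.mem_image] at heI
    rw [hPdef, Finset.mem_image] at heP
    obtain ⟨a, _, rfl⟩ := heI
    obtain ⟨x, hx, hxe⟩ := heP
    have hxmem : x ∈ Sym2.map f a := by rw [← hxe]; simp
    rw [Sym2.mem_map] at hxmem
    obtain ⟨y, _, hy⟩ := hxmem
    exact ((hXmem x).mp hx) ⟨y, hy⟩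
  have hIcard : I.card = (edgeFS G).card :=
    Finset.card_image_of_injective _ (Sym2.map.injective f.injective)
  have hPinj : ∀ x ∈ X, ∀ y ∈ X, s(x, nb x) = s(y, nb y) → x = y := by
    intro x hx y hy hxy
    rcases Sym2.eq_iff.mp hxy with ⟨h1, _⟩ | ⟨h1, _⟩
    · exact h1
    · exact absurd (h1 ▸ hnbrange y ((hXmem y).mp hy)) ((hXmem x).mp hx)
  have hPcard : P.card = X.card := Finset.card_image_of_injOn
    (fun x hx y hy h => hPinj x (Finset.mem_coe.mp hx) y (Finset.mem_coe.mp hy) h)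
  have hsplit : edgeFS G' = I ∪ P := by
    apply Finset.Subset.antisymm
    · intro e he
      rcases hcover e he with h | h
      · exact Finset.mem_union_left _ h
      · exact Finset.mem_union_right _ h
    · intro e he
      rcases Finset.mem_union.mp he with h | h
      · exact hIsub h
      · exact hPsub h
  have hdisj : Disjoint I P := Finset.disjoint_left.mpr (fun {e} hI hP => hIP e hI hP)
  have hcards : (edgeFS G').card = (edgeFS G).card + X.card := by
    rw [hsplit, Finset.card_union_of_disjoint hdisj, hIcard, hPcard]
  -- select the labels for the pendant edges
  have hSsel : ∃ S ⊆ L, S.card = X.card ∧ (∀ s ∈ S, 1 < s) ∧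
      (∀ s ∈ S, ∀ a ∈ L, ∀ b ∈ L, a ∉ S → b ∉ S → a ≠ b → s < a ∨ s < b) := by
    by_cases hX0 : X.card = 0
    · exact ⟨∅, Finset.empty_subset _, by simp [hX0], by simp, by simp⟩
    · have hm1 : 1 ≤ (edgeFS G).card := by
        obtain ⟨x, hx⟩ := Finset.card_pos.mp (Nat.pos_of_ne_zero hX0)
        obtain ⟨v, _, hv2⟩ := hnbE x ((hXmem x).mp hx)
        have hdv : 0 < (G.neighborFinset v).card := by
          rw [SimpleGraph.card_neighborFinset_eq_degree]; omega
        obtain ⟨u, hu⟩ := Finset.card_pos.mp hdv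
        have : s(v, u) ∈ edgeFS G :=
          (mem_edgeFS G _).mpr (G.mem_edgeSet.mpr (by simpa using hu))
        exact Finset.card_pos.mpr ⟨_, this⟩
      have hLne : L.Nonempty := Finset.card_pos.mp (by rw [hLcard, hcards]; omega)
      have hl0L : L.min' hLne ∈ L := L.min'_mem hLne
      have hAcard : X.card ≤ (L.erase (L.min' hLne)).card := by
        rw [Finset.card_erase_of_mem hl0L, hLcard, hcards]; omega
      obtain ⟨S, hSA, hScard, hSle⟩ := exists_smallest_subset (L.erase (L.min' hLne)) X.card hAcard
      have hSL : S ⊆ L := hSA.trans (Finset.erase_subset _ _)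
      refine ⟨S, hSL, hScard, ?_, ?_⟩
      · intro s hs
        have h1 : L.min' hLne ≤ s := L.min'_le s (hSL hs)
        have h2 : s ≠ L.min' hLne := Finset.ne_of_mem_erase (hSA hs)
        have h3 := hL1 _ hl0L
        have := lt_of_le_of_ne h1 (Ne.symm h2)
        linarith
      · intro s hs a ha b hb haS hbS hab
        by_cases hal : a = L.min' hLne
        · right
          have hbl : b ≠ L.min' hLne := by rw [← hal]; exact fun h => hab h.symm
          have hle := hSle s hs b (Finset.mem_erase.mpr ⟨hbl, hb⟩) hbS
          exact lt_of_le_of_ne hle (fun h => hbS (h ▸ hs))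
        · left
          exact lt_of_le_of_ne (hSle s hs a (Finset.mem_erase.mpr ⟨hal, ha⟩) haS)
            (fun h => haS (h ▸ hs))
  obtain ⟨S, hSL, hScard, hS1, hSlt⟩ := hSsel
  -- the assignment of labels to pendant edges
  have hXS : X.card = S.card := hScard.symm
  set eqv := Finset.equivOfCardEq hXS with heqvdef
  set σ : V' → ℝ := fun x => if h : x ∈ X then (eqv ⟨x, h⟩ : ℝ) else 1 with hσdef
  have hσmem : ∀ x ∈ X, σ x ∈ S := by
    intro x hx
    simp only [hσdef, dif_pos hx]
    exact (eqv ⟨x, hx⟩).2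
  have hσinj : ∀ x ∈ X, ∀ y ∈ X, σ x = σ y → x = y := by
    intro x hx y hy h
    simp only [hσdef, dif_pos hx, dif_pos hy] at h
    have := eqv.injective (Subtype.ext h)
    exact congrArg Subtype.val this
  have hσsurj : ∀ s ∈ S, ∃ x ∈ X, σ x = s := by
    intro s hs
    obtain ⟨⟨x, hx⟩, hxeq⟩ := eqv.surjective ⟨s, hs⟩
    refine ⟨x, hx, ?_⟩
    simp only [hσdef, dif_pos hx]
    rw [hxeq]
  -- the weights
  set w : V → ℝ := fun u => ∏ x ∈ X.filter (fun x => nb x = f u), σ x with hwdef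
  have hσ1 : ∀ x ∈ X, 1 ≤ σ x := fun x hx => hL1 _ (hSL (hσmem x hx))
  have hw1 : ∀ u, 1 ≤ w u := fun u =>
    one_le_prod_real _ _ (fun x hx => hσ1 x (Finset.mem_of_mem_filter x hx))
  -- the labels for the original edges
  have hL'card : (L \ S).card = (edgeFS G).card := by
    rw [Finset.card_sdiff_of_subset hSL, hLcard, hcards, hScard]; omega
  obtain ⟨φG, hbijG, hinjG⟩ := hG w hw1 (L \ S)
    (fun a ha => hL1 a (Finset.mem_sdiff.mp ha).1) hL'card
  have hMapsG : ∀ a ∈ edgeFS G, φG a ∈ L \ S :=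
    fun a ha => Finset.mem_coe.mp (hbijG.1 (Finset.mem_coe.mpr ha))
  have hφG1 : ∀ a ∈ edgeFS G, 1 ≤ φG a := fun a ha => hL1 _ (Finset.mem_sdiff.mp (hMapsG a ha)).1
  have hφGL : ∀ a ∈ edgeFS G, φG a ∈ L := fun a ha => (Finset.mem_sdiff.mp (hMapsG a ha)).1
  have hφGnotS : ∀ a ∈ edgeFS G, φG a ∉ S := fun a ha => (Finset.mem_sdiff.mp (hMapsG a ha)).2
  -- the labelling of G'
  set φ : Sym2 V' → ℝ := fun e =>
    if hx : ∃ x, x ∉ Set.range f ∧ x ∈ e then σ hx.choose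
    else if ha : ∃ a, a ∈ edgeFS G ∧ Sym2.map f a = e then φG ha.choose else 0 with hφdef
  have hφP : ∀ x, x ∉ Set.range f → φ (s(x, nb x)) = σ x := by
    intro x hx
    have hex : ∃ y, y ∉ Set.range f ∧ y ∈ s(x, nb x) := ⟨x, hx, by simp⟩
    simp only [hφdef, dif_pos hex]
    obtain ⟨hc1, hc2⟩ := hex.choose_spec
    rcases Sym2.mem_iff.mp hc2 with h | h
    · rw [h]
    · exfalso; apply hc1; rw [h]; exact hnbrange x hx
  have hφI : ∀ a ∈ edgeFS G, φ (Sym2.map f a) = φG a := by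
    intro a ha
    have hne : ¬ ∃ y, y ∉ Set.range f ∧ y ∈ Sym2.map f a := by
      rintro ⟨y, hy1, hy2⟩
      obtain ⟨z, _, hz⟩ := Sym2.mem_map.mp hy2
      exact hy1 ⟨z, hz⟩
    have hex : ∃ b, b ∈ edgeFS G ∧ Sym2.map f b = Sym2.map f a := ⟨a, ha, rfl⟩
    simp only [hφdef, dif_neg hne, dif_pos hex]
    have := hex.choose_spec
    have h2 : hex.choose = a := Sym2.map.injective f.injective this.2
    rw [h2]
  -- vertex products: leaves
  have hfilter_leaf : ∀ x, x ∉ Set.range f →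
      (edgeFS G').filter (fun e => x ∈ e) = {s(x, nb x)} := by
    intro x hx
    ext e
    simp only [Finset.mem_filter, Finset.mem_singleton]
    constructor
    · rintro ⟨he, hxe⟩
      obtain ⟨b, rfl⟩ := Sym2.mem_iff_exists.mp hxe
      have hadj : G'.Adj x b := G'.mem_edgeSet.mp ((mem_edgeFS G' _).mp he)
      rw [huniq x hx b hadj]
    · rintro rfl
      exact ⟨(mem_edgeFS G' _).mpr (G'.mem_edgeSet.mpr (hnbadj x hx)), by simp⟩
  have hvleaf : ∀ x, x ∉ Set.range f → vProd G' φ x = σ x := by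
    intro x hx
    rw [vProd, hfilter_leaf x hx, Finset.prod_singleton, hφP x hx]
  -- vertex products: original vertices
  have hfilter_f : ∀ u : V, (edgeFS G').filter (fun e => f u ∈ e) =
      ((edgeFS G).filter (fun e => u ∈ e)).image (Sym2.map f)
        ∪ (X.filter (fun x => nb x = f u)).image (fun x => s(x, nb x)) := by
    intro u
    ext e
    simp only [Finset.mem_filter, Finset.mem_union, Finset.mem_image]
    constructor
    · rintro ⟨he, hue⟩
      rcases hcover e he with hI | hP
      · left
        rw [hIdef, Finset.mem_image] at hI
        obtain ⟨a, ha, rfl⟩ := hI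
        obtain ⟨y, hy, hyu⟩ := Sym2.mem_map.mp hue
        exact ⟨a, ⟨ha, (f.injective hyu) ▸ hy⟩, rfl⟩
      · right
        rw [hPdef, Finset.mem_image] at hP
        obtain ⟨x, hxX, rfl⟩ := hP
        refine ⟨x, ⟨hxX, ?_⟩, rfl⟩
        rcases Sym2.mem_iff.mp hue with h | h
        · exact absurd (h ▸ (⟨u, rfl⟩ : f u ∈ Set.range f)) ((hXmem x).mp hxX)
        · exact h.symm
    · rintro (⟨a, ⟨ha, hua⟩, rfl⟩ | ⟨x, hxf, rfl⟩)
      · exact ⟨hIsub (Finset.mem_image_of_mem _ ha),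
          Sym2.mem_map.mpr ⟨u, hua, rfl⟩⟩
      · obtain ⟨hxX, hnbx⟩ := hxf
        exact ⟨hPsub (Finset.mem_image_of_mem _ hxX), by rw [hnbx]; simp⟩
  have hdisj2 : ∀ u : V, Disjoint (((edgeFS G).filter (fun e => u ∈ e)).image (Sym2.map f))
      ((X.filter (fun x => nb x = f u)).image (fun x => s(x, nb x))) := by
    intro u
    rw [Finset.disjoint_left]
    intro e h1 h2
    apply hIP e
    · exact Finset.image_subset_image (Finset.filter_subset _ _) h1
    · exact Finset.image_subset_image (Finset.filter_subset _ _) h2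
  have hvf : ∀ u : V, vProd G' φ (f u) = w u * vProd G φG u := by
    intro u
    rw [vProd, hfilter_f u, Finset.prod_union (hdisj2 u),
      Finset.prod_image (fun a _ b _ h => Sym2.map.injective f.injective h),
      Finset.prod_image (fun x hx y hy h =>
        hPinj x (Finset.mem_of_mem_filter x hx) y (Finset.mem_of_mem_filter y hy) h)]
    rw [mul_comm]
    congr 1
    · apply Finset.prod_congr rfl
      intro x hx
      exact hφP x ((hXmem x).mp (Finset.mem_of_mem_filter x hx))
    · apply Finset.prod_congr rfl
      intro a ha
      exact hφI a (Finset.mem_of_mem_filter a ha)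
  -- no pendant edges at low-degree vertices
  have hnopend : ∀ u : V, G.degree u < 2 → X.filter (fun x => nb x = f u) = ∅ := by
    intro u hu
    rw [Finset.filter_eq_empty_iff]
    intro x hx hnbx
    obtain ⟨v, hv, hv2⟩ := hnbspec x ((hXmem x).mp hx)
    rw [hv] at hnbx
    rw [f.injective hnbx] at hv2
    omega
  -- key: the weighted products of original vertices avoid S
  have hkey : ∀ u : V, w u * vProd G φG u ∉ S := by
    intro u hmem
    rcases lt_or_ge (G.degree u) 2 with hdeg | hdeg
    · have hw0 : w u = 1 := by simp only [hwdef]; rw [hnopend u hdeg]; simp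
      rcases (by omega : G.degree u = 0 ∨ G.degree u = 1) with h0 | h1
      · have hf0 : (edgeFS G).filter (fun e => u ∈ e) = ∅ :=
          Finset.card_eq_zero.mp (by rw [edgeFS_filter_card, h0])
        have : vProd G φG u = 1 := by rw [vProd, hf0]; simp
        rw [hw0, this, mul_one] at hmem
        exact absurd (hS1 _ hmem) (lt_irrefl 1)
      · obtain ⟨a, hfa⟩ := Finset.card_eq_one.mp (by rw [edgeFS_filter_card, h1] :
          ((edgeFS G).filter (fun e => u ∈ e)).card = 1)
        have haE : a ∈ edgeFS G := by
          have : a ∈ (edgeFS G).filter (fun e => u ∈ e) := by rw [hfa]; simp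
          exact Finset.mem_of_mem_filter a this
        have : vProd G φG u = φG a := by rw [vProd, hfa, Finset.prod_singleton]
        rw [hw0, this, one_mul] at hmem
        exact hφGnotS a haE hmem
    · have h2 : 1 < ((edgeFS G).filter (fun e => u ∈ e)).card := by
        rw [edgeFS_filter_card]; omega
      obtain ⟨a, ha, b, hb, hab⟩ := Finset.one_lt_card.mp h2
      have haE : a ∈ edgeFS G := Finset.mem_of_mem_filter a ha
      have hbE : b ∈ edgeFS G := Finset.mem_of_mem_filter b hb
      have hne : φG a ≠ φG b := fun h =>
        hab (hbijG.2.1 (Finset.mem_coe.mpr haE) (Finset.mem_coe.mpr hbE) h)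
      have hprodge : ∀ c ∈ (edgeFS G).filter (fun e => u ∈ e),
          φG c ≤ vProd G φG u := by
        intro c hc
        exact single_le_prod_real _ _
          (fun e he => hφG1 e (Finset.mem_of_mem_filter e he)) c hc
      have hv1 : (1:ℝ) ≤ vProd G φG u :=
        one_le_prod_real _ _ (fun e he => hφG1 e (Finset.mem_of_mem_filter e he))
      rcases hSlt _ hmem (φG a) (hφGL a haE) (φG b) (hφGL b hbE)
        (hφGnotS a haE) (hφGnotS b hbE) hne with h | h
      · have := hprodge a ha
        nlinarith [hw1 u]
      · have := hprodge b hb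
        nlinarith [hw1 u]
  -- conclusion
  refine ⟨φ, ⟨?_, ?_, ?_⟩, ?_⟩
  · -- MapsTo
    intro e he
    rw [Finset.mem_coe] at he
    rcases hcover e he with hI | hP
    · rw [hIdef, Finset.mem_image] at hI
      obtain ⟨a, ha, rfl⟩ := hI
      rw [hφI a ha]
      exact Finset.mem_coe.mpr (hφGL a ha)
    · rw [hPdef, Finset.mem_image] at hP
      obtain ⟨x, hx, rfl⟩ := hP
      rw [hφP x ((hXmem x).mp hx)]
      exact Finset.mem_coe.mpr (hSL (hσmem x hx))
  · -- InjOn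
    intro e1 he1 e2 he2 hφeq
    rw [Finset.mem_coe] at he1 he2
    rcases hcover e1 he1 with h1 | h1 <;> rcases hcover e2 he2 with h2 | h2
    · rw [hIdef, Finset.mem_image] at h1 h2
      obtain ⟨a, ha, rfl⟩ := h1
      obtain ⟨b, hb, rfl⟩ := h2
      rw [hφI a ha, hφI b hb] at hφeq
      rw [hbijG.2.1 (Finset.mem_coe.mpr ha) (Finset.mem_coe.mpr hb) hφeq]
    · exfalso
      rw [hIdef, Finset.mem_image] at h1
      rw [hPdef, Finset.mem_image] at h2
      obtain ⟨a, ha, rfl⟩ := h1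
      obtain ⟨x, hx, rfl⟩ := h2
      rw [hφI a ha, hφP x ((hXmem x).mp hx)] at hφeq
      exact hφGnotS a ha (hφeq ▸ hσmem x hx)
    · exfalso
      rw [hPdef, Finset.mem_image] at h1
      rw [hIdef, Finset.mem_image] at h2
      obtain ⟨x, hx, rfl⟩ := h1
      obtain ⟨a, ha, rfl⟩ := h2
      rw [hφI a ha, hφP x ((hXmem x).mp hx)] at hφeq
      exact hφGnotS a ha (hφeq ▸ hσmem x hx)
    · rw [hPdef, Finset.mem_image] at h1 h2
      obtain ⟨x, hx, rfl⟩ := h1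
      obtain ⟨y, hy, rfl⟩ := h2
      rw [hφP x ((hXmem x).mp hx), hφP y ((hXmem y).mp hy)] at hφeq
      rw [hσinj x hx y hy hφeq]
  · -- SurjOn
    intro ℓ hℓ
    rw [Finset.mem_coe] at hℓ
    by_cases hℓS : ℓ ∈ S
    · obtain ⟨x, hx, hσx⟩ := hσsurj ℓ hℓS
      exact ⟨s(x, nb x), Finset.mem_coe.mpr (hPsub (Finset.mem_image_of_mem _ hx)),
        by rw [hφP x ((hXmem x).mp hx), hσx]⟩
    · have hmem : ℓ ∈ (↑(L \ S) : Set ℝ) :=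
        Finset.mem_coe.mpr (Finset.mem_sdiff.mpr ⟨hℓ, hℓS⟩)
      obtain ⟨a, ha, hφa⟩ := hbijG.2.2 hmem
      have haE : a ∈ edgeFS G := Finset.mem_coe.mp ha
      exact ⟨Sym2.map f a, Finset.mem_coe.mpr (hIsub (Finset.mem_image_of_mem _ haE)),
        by rw [hφI a haE, hφa]⟩
  · -- Injective
    intro y z h
    by_cases hy : y ∈ Set.range f <;> by_cases hz : z ∈ Set.range f
    · obtain ⟨u, rfl⟩ := hy
      obtain ⟨v, rfl⟩ := hz
      rw [hvf, hvf] at h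
      exact congrArg f (hinjG h)
    · exfalso
      obtain ⟨u, rfl⟩ := hy
      rw [hvf, hvleaf z hz] at h
      exact hkey u (h ▸ hσmem z ((hXmem z).mpr hz))
    · exfalso
      obtain ⟨u, rfl⟩ := hz
      rw [hvf, hvleaf y hy] at h
      exact hkey u (h ▸ hσmem y ((hXmem y).mpr hy))
    · rw [hvleaf y hy, hvleaf z hz] at h
      exact hσinj y ((hXmem y).mpr hy) z ((hXmem z).mpr hz) h
end

section
/- Every path with at least three edges and every cycle with at least three edges is universal antimagic. -/
open scoped Classical

/-- `G` has an antimagic `L`-labeling for every set `L` of `(edgeFS G).card` positive reals. -/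
def UnivAntimagic {V : Type*} [Fintype V] (G : SimpleGraph V) : Prop :=
  ∀ L : Finset ℝ, (∀ x ∈ L, 0 < x) → L.card = (edgeFS G).card →
    ∃ φ : Sym2 V → ℝ, Set.BijOn φ ↑(edgeFS G) ↑L ∧ Function.Injective (vSum G φ)

/-!
Sort the labels as `c₀ < c₁ < ⋯ < c_k` and give the edge `{v - 1, v}` of the cycle `0, 1, …, k`
the label `c (σ v)` for a permutation `σ` fixing `0`. When `σ` is the identity or an adjacent
transposition `(p p+1)` with `p ≥ 1`, positions two apart stay in order, so the vertex sums at
`0, 1, …, k - 1` strictly increase and only the wrap-around sum `c_k + c₀` at `k` can repeat one of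
them. For the identity this happens only when `c_k + c₀ = c_v + c_{v+1}` with `1 ≤ v ≤ k - 2`,
and then a suitable transposition puts the wrap-around sum strictly between two consecutive
vertex sums.

The edge `{k, 0}` always carries the least label `c₀`. Hence a path with label set `L` is the cycle
with label set `L ∪ {0}` with the edge labelled `0` deleted, which changes no vertex sum.
-/

open Function Set

theorem injective_of_strictMonoOn_Iio_top {α β : Type*} [LinearOrder α] [OrderTop α] [Preorder β]
    {t : α → β} (ht : StrictMonoOn t (Iio ⊤)) (htop : ∀ a < ⊤, t a ≠ t ⊤) : Injective t := by
  intro a b hab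
  rcases (le_top : a ≤ ⊤).lt_or_eq with ha | rfl <;> rcases (le_top : b ≤ ⊤).lt_or_eq with hb | rfl
  · exact ht.injOn ha hb hab
  · exact absurd hab (htop a ha)
  · exact absurd hab.symm (htop b hb)
  · rfl

theorem StrictMonoOn.ne_of_covBy {α β : Type*} [LinearOrder α] [Preorder β] {t : α → β}
    {s : Set α} (ht : StrictMonoOn t s) {a b : α} (ha : a ∈ s) (hb : b ∈ s) (hab : a ⋖ b)
    {x : β} (hax : t a < x) (hxb : x < t b) {v : α} (hv : v ∈ s) : t v ≠ x := by
  rcases lt_or_ge v b with hvb | hbv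
  · exact ((ht.monotoneOn hv ha (hab.le_of_lt hvb)).trans_lt hax).ne
  · exact (hxb.trans_le (ht.monotoneOn hb hv hbv)).ne'

section CyclicSums

variable {k : ℕ} {c : Fin (k + 1) → ℝ}

/-- The vertex sum at `v` of the cycle `0, 1, …, k` whose edge `{v - 1, v}` carries `b v`. -/
def cycleSum (b : Fin (k + 1) → ℝ) (v : Fin (k + 1)) : ℝ := b v + b (v + 1)

theorem val_add_one_of_lt_last {v : Fin (k + 1)} (hv : v.val < k) : (v + 1).val = v.val + 1 :=
  Fin.val_add_one_of_lt (Fin.lt_def.mpr hv)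

theorem strictMonoOn_cycleSum (hc : StrictMono c) {σ : Fin (k + 1) → Fin (k + 1)}
    (hσ : ∀ v w : Fin (k + 1), v.val + 2 ≤ w.val → σ v < σ w) :
    StrictMonoOn (cycleSum (c ∘ σ)) (Iio ⊤) := by
  intro v hv w hw hvw
  simp only [mem_Iio, Fin.top_eq_last, Fin.lt_def, Fin.val_last] at hv hw
  rw [Fin.lt_def] at hvw
  have hv1 := val_add_one_of_lt_last hv
  have hw1 := val_add_one_of_lt_last hw
  simp only [cycleSum, comp_apply]
  rcases (Nat.succ_le_of_lt hvw).eq_or_lt with hwv | hwv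
  · obtain rfl : w = v + 1 := Fin.ext (by omega)
    have := hc (hσ v (v + 1 + 1) (by omega))
    linarith
  · have := hc (hσ v w (by omega))
    have := hc (hσ (v + 1) (w + 1) (by omega))
    linarith

theorem injective_cycleSum_of_ne_last (hc : StrictMono c) {σ : Fin (k + 1) → Fin (k + 1)}
    (hσ : ∀ v w : Fin (k + 1), v.val + 2 ≤ w.val → σ v < σ w)
    (hlast : ∀ v < Fin.last k, cycleSum (c ∘ σ) v ≠ cycleSum (c ∘ σ) (Fin.last k)) :
    Injective (cycleSum (c ∘ σ)) :=
  injective_of_strictMonoOn_Iio_top (strictMonoOn_cycleSum hc hσ)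
    (by simpa only [Fin.top_eq_last] using hlast)

theorem injective_cycleSum_of_lt_of_lt (hc : StrictMono c) {σ : Fin (k + 1) → Fin (k + 1)}
    (hσ : ∀ v w : Fin (k + 1), v.val + 2 ≤ w.val → σ v < σ w) {u : Fin (k + 1)} (hu : u.val + 2 ≤ k)
    (hlt : cycleSum (c ∘ σ) u < cycleSum (c ∘ σ) (Fin.last k))
    (hgt : cycleSum (c ∘ σ) (Fin.last k) < cycleSum (c ∘ σ) (u + 1)) :
    Injective (cycleSum (c ∘ σ)) := by
  have hu1 := val_add_one_of_lt_last (v := u) (by omega)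
  refine injective_cycleSum_of_ne_last hc hσ fun v hv =>
    (strictMonoOn_cycleSum hc hσ).ne_of_covBy ?_ ?_ ?_ hlt hgt (by rwa [mem_Iio, Fin.top_eq_last])
  · rw [mem_Iio, Fin.top_eq_last, Fin.lt_def, Fin.val_last]; omega
  · rw [mem_Iio, Fin.top_eq_last, Fin.lt_def, Fin.val_last]; omega
  · rw [Fin.covBy_iff, Nat.covBy_iff_add_one_eq]; omega

theorem val_swap_castSucc_succ (p : Fin k) (v : Fin (k + 1)) :
    (Equiv.swap p.castSucc p.succ v).val =
      if v.val = p.val then p.val + 1 else if v.val = p.val + 1 then p.val else v.val := by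
  simp only [Equiv.swap_apply_def, Fin.ext_iff, Fin.val_castSucc, Fin.val_succ]
  split_ifs <;> simp_all only [Fin.val_castSucc, Fin.val_succ]

theorem swap_castSucc_succ_lt (p : Fin k) {v w : Fin (k + 1)} (h : v.val + 2 ≤ w.val) :
    Equiv.swap p.castSucc p.succ v < Equiv.swap p.castSucc p.succ w := by
  rw [Fin.lt_def, val_swap_castSucc_succ, val_swap_castSucc_succ]
  split_ifs <;> omega

theorem swap_castSucc_succ_zero {p : Fin k} (hp : 0 < p.val) : Equiv.swap p.castSucc p.succ 0 = 0 :=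
  Fin.ext (by rw [val_swap_castSucc_succ, Fin.val_zero, if_neg (by omega), if_neg (by omega)])

theorem exists_perm_of_lt_cycleSum_last_lt (hc : StrictMono c) {p : Fin k} (hp : 0 < p.val)
    {u : Fin (k + 1)} (hu : u.val + 2 ≤ k)
    (hlt : cycleSum (c ∘ Equiv.swap p.castSucc p.succ) u <
      cycleSum (c ∘ Equiv.swap p.castSucc p.succ) (Fin.last k))
    (hgt : cycleSum (c ∘ Equiv.swap p.castSucc p.succ) (Fin.last k) <
      cycleSum (c ∘ Equiv.swap p.castSucc p.succ) (u + 1)) :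
    ∃ σ : Equiv.Perm (Fin (k + 1)), σ 0 = 0 ∧ Injective (cycleSum (c ∘ σ)) :=
  ⟨_, swap_castSucc_succ_zero hp,
    injective_cycleSum_of_lt_of_lt hc (fun _ _ => swap_castSucc_succ_lt p) hu hlt hgt⟩

theorem one_le_val_of_cycleSum_eq_last (hk : 2 ≤ k) (hc : StrictMono c) {v : Fin (k + 1)}
    (hv : v.val < k) (hvW : cycleSum c v = cycleSum c (Fin.last k)) : 1 ≤ v.val := by
  by_contra h
  obtain rfl : v = 0 := Fin.ext (by rw [Fin.val_zero]; omega)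
  have := hc (show (0 : Fin (k + 1)) + 1 < Fin.last k by
    rw [Fin.lt_def, val_add_one_of_lt_last hv, Fin.val_last]; omega)
  simp only [cycleSum, Fin.last_add_one] at hvW
  linarith

theorem val_add_two_le_of_cycleSum_eq_last (hk : 2 ≤ k) (hc : StrictMono c) {v : Fin (k + 1)}
    (hv : v.val < k) (hvW : cycleSum c v = cycleSum c (Fin.last k)) : v.val + 2 ≤ k := by
  by_contra h
  have hv1 : v + 1 = Fin.last k := Fin.ext (by rw [val_add_one_of_lt_last hv, Fin.val_last]; omega)
  have := hc (show 0 < v by rw [Fin.lt_def, Fin.val_zero]; omega)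
  simp only [cycleSum, Fin.last_add_one, hv1] at hvW
  linarith

/-- If `c₀ + c_k = c_v + c_{v+1}` with `v ≥ 2`, swapping `v - 1` and `v` moves the wrap-around sum
strictly between the sums at `v` and `v + 1`. -/
theorem exists_perm_of_cycleSum_eq_last_of_two_le (hc : StrictMono c) {v : Fin (k + 1)}
    (hv : 2 ≤ v.val) (hvk : v.val + 2 ≤ k) (hvW : cycleSum c v = cycleSum c (Fin.last k)) :
    ∃ σ : Equiv.Perm (Fin (k + 1)), σ 0 = 0 ∧ Injective (cycleSum (c ∘ σ)) := by
  have lt (a b : Fin (k + 1)) (h : a.val < b.val) : c a < c b := hc h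
  have eq (a b : Fin (k + 1)) (h : a.val = b.val) : c a = c b := congrArg c (Fin.ext h)
  have hv1 := val_add_one_of_lt_last (v := v) (by omega)
  have hv2 := val_add_one_of_lt_last (v := v + 1) (by omega)
  obtain ⟨p, hp⟩ : ∃ p : Fin k, p.val + 1 = v.val := ⟨⟨v.val - 1, by omega⟩, by simp only; omega⟩
  have hσ := val_swap_castSucc_succ p
  have hσ0 := swap_castSucc_succ_zero (p := p) (by omega)
  simp only [cycleSum, Fin.last_add_one] at hvW
  refine exists_perm_of_lt_cycleSum_last_lt hc (p := p) (u := v) (by omega) hvk ?_ ?_ <;>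
    set σ := Equiv.swap p.castSucc p.succ <;>
    simp only [cycleSum, comp_apply, Fin.last_add_one, hσ0]
  all_goals
    have := eq (σ (v + 1)) (v + 1) (by rw [hσ, if_neg (by omega), if_neg (by omega)])
    have := eq (σ (Fin.last k)) (Fin.last k)
      (by rw [hσ, Fin.val_last, if_neg (by omega), if_neg (by omega)])
  · have := lt (σ v) v (by rw [hσ, if_neg (by omega), if_pos (by omega)]; omega)
    linarith
  · have := lt v (σ (v + 1 + 1)) (by rw [hσ, if_neg (by omega), if_neg (by omega)]; omega)
    linarith

/-- If `c₀ + c_k = c₁ + c₂`, swapping `2` and `3` moves the wrap-around sum strictly between the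
sums at `0` and `1`. -/
theorem exists_perm_of_cycleSum_eq_last_of_eq_one (hc : StrictMono c) {v : Fin (k + 1)}
    (hv : v.val = 1) (hvk : v.val + 2 ≤ k) (hvW : cycleSum c v = cycleSum c (Fin.last k)) :
    ∃ σ : Equiv.Perm (Fin (k + 1)), σ 0 = 0 ∧ Injective (cycleSum (c ∘ σ)) := by
  have lt (a b : Fin (k + 1)) (h : a.val < b.val) : c a < c b := hc h
  have eq (a b : Fin (k + 1)) (h : a.val = b.val) : c a = c b := congrArg c (Fin.ext h)
  have hv1 := val_add_one_of_lt_last (v := v) (by omega)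
  have h01 : ((0 : Fin (k + 1)) + 1).val = 1 := by
    rw [val_add_one_of_lt_last] <;> rw [Fin.val_zero]; omega
  have h02 : ((0 : Fin (k + 1)) + 1 + 1).val = 2 := by
    rw [val_add_one_of_lt_last] <;> omega
  obtain ⟨p, hp⟩ : ∃ p : Fin k, p.val = 2 := ⟨⟨2, by omega⟩, rfl⟩
  have hσ := val_swap_castSucc_succ p
  have hσ0 := swap_castSucc_succ_zero (p := p) (by omega)
  simp only [cycleSum, Fin.last_add_one] at hvW
  refine exists_perm_of_lt_cycleSum_last_lt hc (p := p) (u := 0) (by omega)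
    (by rw [Fin.val_zero]; omega) ?_ ?_ <;>
    set σ := Equiv.swap p.castSucc p.succ <;>
    simp only [cycleSum, comp_apply, Fin.last_add_one, hσ0]
  all_goals
    have := eq (σ (0 + 1)) v (by rw [hσ, if_neg (by omega), if_neg (by omega)]; omega)
    have := lt (v + 1) (σ (0 + 1 + 1)) (by rw [hσ, if_pos (by omega)]; omega)
    have := lt 0 v (by rw [Fin.val_zero]; omega)
    have := lt v (v + 1) (by omega)
    rcases (by omega : k = 3 ∨ 4 ≤ k) with rfl | hk
    · have := eq (σ (Fin.last 3)) (v + 1)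
        (by rw [hσ, Fin.val_last, if_neg (by omega), if_pos (by omega)]; omega)
      linarith
    · have := eq (σ (Fin.last k)) (Fin.last k)
        (by rw [hσ, Fin.val_last, if_neg (by omega), if_neg (by omega)])
      have := lt (v + 1) (Fin.last k) (by rw [Fin.val_last]; omega)
      linarith

theorem exists_perm_injective_cycleSum (hk : 2 ≤ k) (hc : StrictMono c) :
    ∃ σ : Equiv.Perm (Fin (k + 1)), σ 0 = 0 ∧ Injective (cycleSum (c ∘ σ)) := by
  by_cases hW : ∀ v < Fin.last k, cycleSum c v ≠ cycleSum c (Fin.last k)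
  · refine ⟨1, rfl, injective_cycleSum_of_ne_last hc (fun v w h => ?_) hW⟩
    rw [Equiv.Perm.coe_one, id, id, Fin.lt_def]
    omega
  push Not at hW
  obtain ⟨v, hv, hvW⟩ := hW
  rw [Fin.lt_def, Fin.val_last] at hv
  have hvk := val_add_two_le_of_cycleSum_eq_last hk hc hv hvW
  rcases (one_le_val_of_cycleSum_eq_last hk hc hv hvW).eq_or_lt with hv1 | hv2
  · exact exists_perm_of_cycleSum_eq_last_of_eq_one hc hv1.symm hvk hvW
  · exact exists_perm_of_cycleSum_eq_last_of_two_le hc hv2 hvk hvW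

end CyclicSums

section EdgeEnumeration

variable {V ι : Type*} [Fintype V] [DecidableEq V] [Fintype ι] {G : SimpleGraph V} {E : ι → Sym2 V}

theorem bijOn_extend_edgeFS (hE : Injective E) (hG : edgeFS G = Finset.univ.image E)
    {ℓ : ι → ℝ} {L : Set ℝ} (hℓ : BijOn ℓ univ L) : BijOn (extend E ℓ 0) (edgeFS G) L := by
  rw [hG, Finset.coe_image, Finset.coe_univ, ← bijOn_comp_iff hE.injOn]
  simpa only [comp_def, hE.extend_apply] using hℓ

theorem vSum_extend (hE : Injective E) (hG : edgeFS G = Finset.univ.image E) (ℓ : ι → ℝ) (v : V) :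
    vSum G (extend E ℓ 0) v = ∑ i ∈ Finset.univ.filter (fun i => v ∈ E i), ℓ i := by
  rw [vSum, hG, Finset.sum_filter, Finset.sum_image hE.injOn, Finset.sum_filter]
  simp only [hE.extend_apply]

theorem vSum_eq_of_edgeFS_eq_insert {H : SimpleGraph V} {e : Sym2 V} {φ : Sym2 V → ℝ}
    (he : e ∉ edgeFS G) (hH : edgeFS H = insert e (edgeFS G)) (hφ : φ e = 0) :
    vSum H φ = vSum G φ := by
  funext v
  rw [vSum, vSum, hH, Finset.sum_filter, Finset.sum_filter, Finset.sum_insert he, hφ, ite_self,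
    zero_add]

end EdgeEnumeration

section Cycle

open SimpleGraph

variable {k : ℕ}

theorem cycleGraph_adj_iff {u v : Fin (k + 3)} :
    (cycleGraph (k + 3)).Adj u v ↔ v = u + 1 ∨ u = v + 1 := by
  rw [cycleGraph_adj, sub_eq_iff_eq_add', sub_eq_iff_eq_add', or_comm]

def cycleEdge (v : Fin (k + 3)) : Sym2 (Fin (k + 3)) := s(v, v + 1)

theorem add_one_add_one_ne_self (v : Fin (k + 3)) : v + 1 + 1 ≠ v := by
  rw [add_assoc, Ne, add_eq_left, Fin.ext_iff, Fin.val_add, Fin.val_one, Fin.val_zero,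
    Nat.mod_eq_of_lt (by omega)]
  omega

theorem injective_cycleEdge : Injective (cycleEdge (k := k)) := by
  intro u v h
  rcases Sym2.eq_iff.mp h with ⟨huv, -⟩ | ⟨hu, hv⟩
  · exact huv
  · subst hv
    exact absurd hu.symm (add_one_add_one_ne_self u)

theorem edgeFS_cycleGraph : edgeFS (cycleGraph (k + 3)) = Finset.univ.image cycleEdge := by
  ext e
  induction e using Sym2.ind with
  | _ u v =>
    simp only [edgeFS, Set.mem_toFinset, mem_edgeSet, cycleGraph_adj_iff, Finset.mem_image,
      Finset.mem_univ, true_and, cycleEdge, Sym2.eq_iff]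
    constructor
    · rintro (h | h)
      · exact ⟨u, .inl ⟨rfl, h.symm⟩⟩
      · exact ⟨v, .inr ⟨rfl, h.symm⟩⟩
    · rintro ⟨w, ⟨rfl, rfl⟩ | ⟨rfl, rfl⟩⟩
      · exact .inl rfl
      · exact .inr rfl

theorem card_edgeFS_cycleGraph : (edgeFS (cycleGraph (k + 3))).card = k + 3 := by
  rw [edgeFS_cycleGraph, Finset.card_image_of_injective _ injective_cycleEdge, Finset.card_univ,
    Fintype.card_fin]

theorem filter_mem_cycleEdge (v : Fin (k + 3)) :
    Finset.univ.filter (fun i => v ∈ cycleEdge i) = {v - 1, v} := by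
  ext i
  simp only [cycleEdge, Sym2.mem_iff, Finset.mem_filter, Finset.mem_univ, true_and,
    Finset.mem_insert, Finset.mem_singleton, eq_sub_iff_add_eq]
  tauto

theorem exists_antimagic_cycleGraph {L : Finset ℝ} (hL : L.card = k + 3) :
    ∃ φ : Sym2 (Fin (k + 3)) → ℝ, BijOn φ (edgeFS (cycleGraph (k + 3))) L ∧
      (∀ x ∈ L, φ s(Fin.last (k + 2), 0) ≤ x) ∧ Injective (vSum (cycleGraph (k + 3)) φ) := by
  set c := L.orderEmbOfFin hL
  have hc : range c = L := L.range_orderEmbOfFin hL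
  obtain ⟨σ, hσ0, hσ⟩ : ∃ σ : Equiv.Perm (Fin (k + 3)), σ 0 = 0 ∧ Injective (cycleSum (c ∘ σ)) :=
    exists_perm_injective_cycleSum (by omega) c.strictMono
  set ℓ : Fin (k + 3) → ℝ := fun i => c (σ (i + 1))
  have hℓ : BijOn ℓ univ L := by
    refine ⟨fun i _ => L.orderEmbOfFin_mem hL _,
      (c.injective.comp (σ.injective.comp (add_left_injective 1))).injOn, fun x hx => ?_⟩
    rw [← hc] at hx
    obtain ⟨j, rfl⟩ := hx
    exact ⟨σ.symm j - 1, trivial, by simp only [ℓ, sub_add_cancel, Equiv.apply_symm_apply]⟩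
  refine ⟨extend cycleEdge ℓ 0, bijOn_extend_edgeFS injective_cycleEdge edgeFS_cycleGraph hℓ,
    ?_, ?_⟩
  · intro x hx
    rw [← Finset.mem_coe, ← hc] at hx
    obtain ⟨j, rfl⟩ := hx
    have hlast : s(Fin.last (k + 2), 0) = cycleEdge (Fin.last (k + 2)) := by
      rw [cycleEdge, Fin.last_add_one]
    rw [hlast, injective_cycleEdge.extend_apply]
    simp only [ℓ, Fin.last_add_one, hσ0]
    exact c.monotone (Fin.zero_le j)
  · convert hσ using 1
    funext v
    rw [vSum_extend injective_cycleEdge edgeFS_cycleGraph, filter_mem_cycleEdge,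
      Finset.sum_pair (by simp)]
    simp only [ℓ, cycleSum, comp_apply, sub_add_cancel]

theorem univAntimagic_cycleGraph {n : ℕ} (hn : 3 ≤ n) : UnivAntimagic (cycleGraph n) := by
  obtain ⟨k, rfl⟩ : ∃ k, n = k + 3 := ⟨n - 3, by omega⟩
  intro L _ hL
  obtain ⟨φ, hφ, -, hinj⟩ := exists_antimagic_cycleGraph (hL.trans card_edgeFS_cycleGraph)
  exact ⟨φ, hφ, hinj⟩

end Cycle

section Path

open SimpleGraph

variable {k : ℕ}

theorem edgeFS_cycleGraph_eq_insert :
    edgeFS (cycleGraph (k + 3)) = insert s(Fin.last (k + 2), 0) (edgeFS (pathGraph (k + 3))) := by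
  ext e
  induction e using Sym2.ind with
  | _ u v =>
    simp only [edgeFS, Set.mem_toFinset, mem_edgeSet, Finset.mem_insert, cycleGraph_adj_iff,
      pathGraph_adj, Sym2.eq_iff, Fin.ext_iff, Fin.val_add_one, Fin.val_last, Fin.val_zero]
    split_ifs <;> omega

theorem last_zero_notMem_edgeFS_pathGraph :
    s(Fin.last (k + 2), 0) ∉ edgeFS (pathGraph (k + 3)) := by
  simp only [edgeFS, Set.mem_toFinset, mem_edgeSet, pathGraph_adj, Fin.val_last, Fin.val_zero]
  omega

theorem univAntimagic_pathGraph {n : ℕ} (hn : 2 ≤ n) : UnivAntimagic (pathGraph (n + 1)) := by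
  obtain ⟨k, rfl⟩ : ∃ k, n = k + 2 := ⟨n - 2, by omega⟩
  intro L hpos hL
  have h0 : (0 : ℝ) ∉ L := fun h => (hpos 0 h).false
  have hcard : (insert 0 L).card = k + 3 := by
    rw [Finset.card_insert_of_notMem h0, hL, ← Finset.card_insert_of_notMem
      last_zero_notMem_edgeFS_pathGraph, ← edgeFS_cycleGraph_eq_insert, card_edgeFS_cycleGraph]
  obtain ⟨φ, hφ, hmin, hinj⟩ := exists_antimagic_cycleGraph hcard
  have hφ0 : φ s(Fin.last (k + 2), 0) = 0 := by
    have hmem := hφ.mapsTo (by simp [edgeFS_cycleGraph_eq_insert] : s(Fin.last (k + 2), 0) ∈ _)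
    rcases Finset.mem_insert.mp hmem with h | h
    · exact h
    · exact absurd (hmin 0 (Finset.mem_insert_self 0 L)) (not_le.mpr (hpos _ h))
  rw [edgeFS_cycleGraph_eq_insert, Finset.coe_insert, Finset.coe_insert, ← hφ0,
    BijOn.insert_iff last_zero_notMem_edgeFS_pathGraph (hφ0 ▸ h0)] at hφ
  exact ⟨φ, hφ, vSum_eq_of_edgeFS_eq_insert last_zero_notMem_edgeFS_pathGraph
    edgeFS_cycleGraph_eq_insert hφ0 ▸ hinj⟩

end Path

/-- Every path with at least three edges and every cycle with at least
three edges is universal antimagic. -/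
theorem stmt_18 (n : ℕ) (hn : 3 ≤ n) :
    UnivAntimagic (SimpleGraph.pathGraph (n + 1)) ∧
    UnivAntimagic (SimpleGraph.cycleGraph n) :=
  ⟨univAntimagic_pathGraph (by omega), univAntimagic_cycleGraph hn⟩
end
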